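/- arXiv:1610.03103 — 2 statements merged into one kernel-verified Lean document; each statement's English description precedes it below -/
import Mathlib

section
/- Let g : ℕ → ℝ with g(n) → ∞. Suppose for each n the sum ∑_{i=0}^{R_n − 1} (a_i + b_i) ≤ g(n), where a_i, b_i are positive integers such that the rationals a_i/b_i are pairwise distinct. Then there exists a constant C₀ > 0 and N such that for all n > N, R_n ≤ C₀ · g(n)^{2/3}. -/
open Filter Finset

/-!
Distinct ratios make `i ↦ (aᵢ, bᵢ)` injective, so the pairs form a set `P ⊆ ℕ × ℕ` of size `R`
with total weight `S = ∑ (a + b)`. At most `k²` pairs have weight `< k`, and each of the others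
weighs at least `k`, so `(R - k²) k ≤ S`. Taking `k ≈ √(R/2)` gives `R³ ≲ S²`, i.e. `R ≲ g^{2/3}`.
-/

lemma card_sub_card_filter_lt_mul_le_sum {ι : Type*} (s : Finset ι) (w : ι → ℕ) (k : ℕ) :
    (#s - #(s.filter (w · < k))) * k ≤ ∑ i ∈ s, w i := by
  have hcard : #s - #(s.filter (w · < k)) = #(s.filter (¬ w · < k)) := by
    have := card_filter_add_card_filter_not (s := s) (fun i => w i < k)
    omega
  calc (#s - #(s.filter (w · < k))) * k = #(s.filter (¬ w · < k)) • k := by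
        rw [hcard, smul_eq_mul]
    _ ≤ ∑ i ∈ s.filter (¬ w · < k), w i :=
        card_nsmul_le_sum _ _ _ fun i hi => not_lt.mp (mem_filter.mp hi).2
    _ ≤ ∑ i ∈ s, w i := sum_le_sum_of_subset (filter_subset _ _)

lemma card_filter_add_lt_le_sq (P : Finset (ℕ × ℕ)) (k : ℕ) :
    #(P.filter (fun p => p.1 + p.2 < k)) ≤ k ^ 2 := by
  calc #(P.filter (fun p => p.1 + p.2 < k)) ≤ #(range k ×ˢ range k) := by
        refine card_le_card fun p hp => ?_
        simp only [mem_filter] at hp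
        simp only [mem_product, mem_range]
        omega
    _ = k ^ 2 := by rw [card_product, card_range, sq]

lemma pow_three_le_of_forall_sub_sq_mul_le (R S : ℕ) (h : ∀ k, (R - k ^ 2) * k ≤ S) :
    R ^ 3 ≤ 256 * S ^ 2 + 1 := by
  rcases Nat.lt_or_ge R 2 with hR | hR
  · interval_cases R <;> omega
  set q := R / 2
  set k := Nat.sqrt q
  have hk_sq : k ^ 2 ≤ q := by simpa [sq] using Nat.sqrt_le' q
  have hq_lt : q < (k + 1) ^ 2 := by simpa [sq] using Nat.lt_succ_sqrt' q
  have hk : 1 ≤ k := Nat.le_sqrt.mpr (by omega)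
  have hqk : q * k ≤ S := le_trans (Nat.mul_le_mul_right k (by omega)) (h k)
  have hq : q ≤ 4 * k ^ 2 := by nlinarith
  have hRq : R ≤ 4 * q := by omega
  calc R ^ 3 ≤ (4 * q) ^ 3 := Nat.pow_le_pow_left hRq 3
    _ = 64 * q * q ^ 2 := by ring
    _ ≤ 64 * (4 * k ^ 2) * q ^ 2 := by gcongr
    _ = 256 * (q * k) ^ 2 := by ring
    _ ≤ 256 * S ^ 2 + 1 := by have := Nat.pow_le_pow_left hqk 2; omega

lemma card_pow_three_le_sum_sq (P : Finset (ℕ × ℕ)) :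
    #P ^ 3 ≤ 256 * (∑ p ∈ P, (p.1 + p.2)) ^ 2 + 1 :=
  pow_three_le_of_forall_sub_sq_mul_le _ _ fun k =>
    (Nat.mul_le_mul_right k (Nat.sub_le_sub_left (card_filter_add_lt_le_sq P k) _)).trans
      (card_sub_card_filter_lt_mul_le_sum P (fun p => p.1 + p.2) k)

lemma le_mul_rpow_two_thirds_of_pow_three_le {r c x : ℝ} (hc : 0 ≤ c) (hx : 0 ≤ x)
    (h : r ^ 3 ≤ c ^ 3 * x ^ 2) : r ≤ c * x ^ ((2 : ℝ) / 3) := by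
  have hcube : (c * x ^ ((2 : ℝ) / 3)) ^ 3 = c ^ 3 * x ^ 2 := by
    rw [mul_pow, ← Real.rpow_natCast (x ^ _), ← Real.rpow_mul hx]
    norm_num
  refine le_of_pow_le_pow_left₀ (n := 3) (by norm_num) (by positivity) ?_
  rwa [hcube]

theorem stmt_8_general (g : ℕ → ℝ) (hg : Tendsto g atTop atTop)
    (R : ℕ → ℕ) (a b : ℕ → ℕ → ℕ)
    (hdistinct : ∀ n, ∀ i < R n, ∀ j < R n, i ≠ j →
      (a n i : ℚ) / (b n i) ≠ (a n j : ℚ) / (b n j))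
    (hsum : ∀ n, (∑ i ∈ Finset.range (R n), ((a n i : ℝ) + b n i)) ≤ g n) :
    ∃ C₀ > (0 : ℝ), ∃ N : ℕ, ∀ n > N, (R n : ℝ) ≤ C₀ * (g n) ^ ((2 : ℝ) / 3) := by
  obtain ⟨N, hN⟩ := (hg.eventually_ge_atTop 1).exists_forall_of_atTop
  refine ⟨8, by norm_num, N, fun n hn => ?_⟩
  have hg1 : 1 ≤ g n := hN n hn.le
  have hinj : Set.InjOn (fun i => (a n i, b n i)) (range (R n)) := by
    intro i hi j hj hij
    by_contra hne
    obtain ⟨ha, hb⟩ := Prod.mk.inj hij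
    exact hdistinct n i (mem_range.mp hi) j (mem_range.mp hj) hne (by rw [ha, hb])
  set P := (range (R n)).image fun i => (a n i, b n i)
  have hcard : #P = R n := by rw [card_image_of_injOn hinj, card_range]
  set S := ∑ p ∈ P, (p.1 + p.2) with hS_def
  have hS : (S : ℝ) ≤ g n := by
    rw [hS_def, sum_image hinj]; push_cast; exact hsum n
  have hcube : (R n : ℝ) ^ 3 ≤ 256 * (S : ℝ) ^ 2 + 1 := by
    exact_mod_cast hcard ▸ card_pow_three_le_sum_sq P
  refine le_mul_rpow_two_thirds_of_pow_three_le (by norm_num) (by linarith) ?_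
  nlinarith [S.cast_nonneg (α := ℝ)]

/-- If `g(n) → ∞` and for each `n` we have `R_n` pairs of positive integers
`(a_i, b_i)` with pairwise distinct ratios `a_i/b_i` and
`∑_{i<R_n} (a_i + b_i) ≤ g(n)`, then eventually `R_n ≤ C₀ · g(n)^{2/3}`. -/
theorem stmt_8 (g : ℕ → ℝ) (hg : Tendsto g atTop atTop)
    (R : ℕ → ℕ) (a b : ℕ → ℕ → ℕ)
    (hpos : ∀ n, ∀ i < R n, 0 < a n i ∧ 0 < b n i)
    (hdistinct : ∀ n, ∀ i < R n, ∀ j < R n, i ≠ j →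
      (a n i : ℚ) / (b n i) ≠ (a n j : ℚ) / (b n j))
    (hsum : ∀ n, (∑ i ∈ Finset.range (R n), ((a n i : ℝ) + b n i)) ≤ g n) :
    ∃ C₀ > (0 : ℝ), ∃ N : ℕ, ∀ n > N, (R n : ℝ) ≤ C₀ * (g n) ^ ((2 : ℝ) / 3) :=
  stmt_8_general g hg R a b hdistinct hsum
end

section
/- For p ∈ (0,1), q = 1 − p, a ∈ (0, 1/2], x ∈ ℝ and integer k, let N(n) = (q/p)·n − x·n^a + k. Then n(N) := (p/q)·N + x·(p/q)^{a+1}·N^a satisfies N(n(N)) = N + O(1) as N → ∞; more precisely, |N(n(N)) − N| is bounded for large N. -/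
/-!
Write `r = p/q`, so that `N(t) = t/r − x t^a + k`, and put `c = x r^(a+1)`. The linear terms of
`N(n(N))` cancel exactly, leaving `N(n(N)) − N = x ((rN)^a − (rN + c N^a)^a) + k`. By concavity of
`t ↦ t^a`, the bracket is at most `a (rN/2)^(a−1) |c| N^a ∝ N^(2a−1)` once `rN + c N^a ≥ rN/2`,
and `N^(2a−1) ≤ 1` because `a ≤ 1/2`.
-/

open Filter

namespace Real

/-- The tangent-line inequality for the concave function `t ↦ t ^ a` on `[0, ∞)`. -/
theorem rpow_sub_rpow_le_mul_sub {a u v : ℝ} (ha0 : 0 ≤ a) (ha1 : a ≤ 1) (hu : 0 < u)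
    (hv : 0 ≤ v) : v ^ a - u ^ a ≤ a * u ^ (a - 1) * (v - u) := by
  have hvu : 0 ≤ v / u := div_nonneg hv hu.le
  have bernoulli := rpow_one_add_le_one_add_mul_self (s := v / u - 1) (by linarith) ha0 ha1
  rw [add_sub_cancel] at bernoulli
  have hv_eq : v ^ a = u ^ a * (v / u) ^ a := by
    rw [← mul_rpow hu.le hvu, mul_div_cancel₀ v hu.ne']
  calc v ^ a - u ^ a ≤ u ^ a * (1 + a * (v / u - 1)) - u ^ a := by
        rw [hv_eq]; gcongr
    _ = a * (u ^ a / u) * (v - u) := by field_simp; ring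
    _ = a * u ^ (a - 1) * (v - u) := by rw [rpow_sub_one hu.ne']

theorem abs_rpow_sub_rpow_le_of_le {a c u v : ℝ} (ha0 : 0 ≤ a) (ha1 : a ≤ 1) (hc : 0 < c)
    (hcu : c ≤ u) (hcv : c ≤ v) : |u ^ a - v ^ a| ≤ a * c ^ (a - 1) * |u - v| := by
  have tangent_le {w t : ℝ} (hcw : c ≤ w) : a * w ^ (a - 1) * t ≤ a * c ^ (a - 1) * |t| := by
    rcases le_total 0 t with ht | ht
    · rw [abs_of_nonneg ht]
      have := rpow_le_rpow_of_nonpos hc hcw (by linarith : a - 1 ≤ 0)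
      gcongr
    · have : a * w ^ (a - 1) * t ≤ 0 :=
        mul_nonpos_of_nonneg_of_nonpos (mul_nonneg ha0 (rpow_nonneg (hc.le.trans hcw) _)) ht
      exact this.trans (by positivity)
  rw [abs_le]
  constructor
  · have := rpow_sub_rpow_le_mul_sub ha0 ha1 (hc.trans_le hcu) (hc.le.trans hcv)
    have := tangent_le (t := v - u) hcu
    rw [abs_sub_comm] at this
    linarith
  · exact (rpow_sub_rpow_le_mul_sub ha0 ha1 (hc.trans_le hcv) (hc.le.trans hcu)).trans
      (tangent_le hcv)

theorem abs_rpow_mul_sub_rpow_add_le {a r c N : ℝ} (ha0 : 0 ≤ a) (ha2 : a ≤ 1 / 2) (hr : 0 < r)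
    (hN : 1 ≤ N) (hc : |c| * N ^ a ≤ r * N / 2) :
    |(r * N) ^ a - (r * N + c * N ^ a) ^ a| ≤ a * (r / 2) ^ (a - 1) * |c| := by
  have hN0 : 0 < N := one_pos.trans_le hN
  have hNa : 0 < N ^ a := rpow_pos_of_pos hN0 a
  have hlower : r / 2 * N ≤ r * N + c * N ^ a := by
    have := neg_abs_le c
    nlinarith
  have hpert : |r * N - (r * N + c * N ^ a)| = |c| * N ^ a := by
    rw [sub_add_cancel_left, abs_neg, abs_mul, abs_of_pos hNa]
  have hNexp : N ^ (a - 1) * N ^ a ≤ 1 := by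
    rw [← rpow_add hN0]
    exact rpow_le_one_of_one_le_of_nonpos hN (by linarith)
  calc |(r * N) ^ a - (r * N + c * N ^ a) ^ a|
        ≤ a * (r / 2 * N) ^ (a - 1) * (|c| * N ^ a) := by
          rw [← hpert]
          exact abs_rpow_sub_rpow_le_of_le ha0 (by linarith) (by positivity)
            (by nlinarith) hlower
    _ = a * (r / 2) ^ (a - 1) * |c| * (N ^ (a - 1) * N ^ a) := by
          rw [mul_rpow (by positivity) hN0.le]; ring
    _ ≤ a * (r / 2) ^ (a - 1) * |c| := by
          exact mul_le_of_le_one_right (by positivity) hNexp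

theorem eventually_mul_rpow_le_mul_atTop {a r : ℝ} (ha : a < 1) (hr : 0 < r) (c : ℝ) :
    ∀ᶠ N in atTop, c * N ^ a ≤ r * N := by
  have hgrowth := (tendsto_rpow_atTop (sub_pos.2 ha)).eventually_ge_atTop (c / r)
  filter_upwards [hgrowth, eventually_gt_atTop 0] with N hN hN0
  calc c * N ^ a = c / r * N ^ a * r := by field_simp
    _ ≤ N ^ (1 - a) * N ^ a * r := by gcongr
    _ = r * N := by rw [← rpow_add hN0, sub_add_cancel, rpow_one, mul_comm]

end Real

open Real

/-- For `N(t) = (q/p)t − x t^a + k` with `0 < a ≤ 1/2`, the approximate inverse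
`n(N) = (p/q)N + x (p/q)^{a+1} N^a` satisfies `N(n(N)) = N + O(1)`:
`|N(n(N)) − N|` is bounded for large `N`. -/
theorem stmt_14 (p a x k : ℝ) (hp : 0 < p) (hp1 : p < 1) (ha : 0 < a) (ha2 : a ≤ 1 / 2) :
    let q := 1 - p
    let Nf : ℝ → ℝ := fun t => (q / p) * t - x * t ^ a + k
    let nf : ℝ → ℝ := fun N => (p / q) * N + x * (p / q) ^ (a + 1) * N ^ a
    ∃ C : ℝ, ∃ N₀ : ℝ, ∀ N ≥ N₀, |Nf (nf N) - N| ≤ C := by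
  intro q Nf nf
  have hq : 0 < q := sub_pos.2 hp1
  set r := p / q
  have hr : 0 < r := div_pos hp hq
  set c := x * r ^ (a + 1) with hc_def
  have error_eq (N : ℝ) (hN : 0 ≤ N) :
      Nf (nf N) - N = x * ((r * N) ^ a - (r * N + c * N ^ a) ^ a) + k := by
    have hqp : q / p = r⁻¹ := (inv_div p q).symm
    change q / p * (r * N + c * N ^ a) - x * (r * N + c * N ^ a) ^ a + k - N = _
    rw [hqp, hc_def, rpow_add_one hr.ne', mul_rpow hr.le hN]
    field_simp
    ring
  obtain ⟨N₀, hN₀⟩ := eventually_atTop.1 <|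
    (eventually_ge_atTop 1).and (eventually_mul_rpow_le_mul_atTop (a := a) (by linarith)
      (half_pos hr) |c|)
  refine ⟨|x| * (a * (r / 2) ^ (a - 1) * |c|) + |k|, N₀, fun N hN => ?_⟩
  obtain ⟨hN1, hsmall⟩ := hN₀ N hN
  rw [error_eq N (by linarith)]
  calc |x * ((r * N) ^ a - (r * N + c * N ^ a) ^ a) + k|
        ≤ |x| * |(r * N) ^ a - (r * N + c * N ^ a) ^ a| + |k| := by
          rw [← abs_mul]; exact abs_add_le _ _
    _ ≤ |x| * (a * (r / 2) ^ (a - 1) * |c|) + |k| := by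
          gcongr
          exact abs_rpow_mul_sub_rpow_add_le ha.le ha2 hr hN1 (by linarith)
end
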